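/- If the number of linearly independent within-group style difference vectors among n samples is at least q, i.e., the differences Δ_i − Δ_{i'} over grouped pairs span ℝ^q, then in the model x_i = x⁰_i + W Δ_i with W of rank q, the set {θ : (x_i − x_{i'})ᵀθ = 0 for all grouped pairs (i,i')} equals {θ : Wᵀθ = 0}. -/

import Mathlib

open Matrix

/-! Since grouped pairs share the same style-free image, each observed difference is
`xᵢ - xᵢ' = W (Δᵢ - Δᵢ')`, and `(W d) ⬝ θ = d ⬝ (Wᵀ θ)`. So `θ` is orthogonal to all observed
differences exactly when `Wᵀ θ` is orthogonal to all style differences, which span the whole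
style space; hence exactly when `Wᵀ θ = 0`. -/

namespace Matrix

variable {R m n : Type*} [CommSemiring R] [Fintype m] [Fintype n]

theorem mulVec_dotProduct_eq_dotProduct_transpose_mulVec (W : Matrix m n R) (v : n → R)
    (θ : m → R) : (W *ᵥ v) ⬝ᵥ θ = v ⬝ᵥ (Wᵀ *ᵥ θ) := by
  rw [mulVec_transpose, dotProduct_comm, dotProduct_mulVec, dotProduct_comm]

theorem eq_zero_of_span_eq_top_of_forall_dotProduct_eq_zero {S : Set (n → R)}
    (hS : Submodule.span R S = ⊤) {w : n → R} (h : ∀ v ∈ S, v ⬝ᵥ w = 0) : w = 0 := by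
  have hker : Submodule.span R S ≤ LinearMap.ker ((dotProductBilin R R).flip w) :=
    Submodule.span_le.mpr h
  rw [hS] at hker
  refine dotProduct_eq_zero w fun v => ?_
  rw [dotProduct_comm]
  exact hker Submodule.mem_top

theorem forall_mulVec_dotProduct_eq_zero_iff {S : Set (n → R)} (hS : Submodule.span R S = ⊤)
    (W : Matrix m n R) (θ : m → R) : (∀ v ∈ S, (W *ᵥ v) ⬝ᵥ θ = 0) ↔ Wᵀ *ᵥ θ = 0 := by
  simp only [mulVec_dotProduct_eq_dotProduct_transpose_mulVec]
  exact ⟨eq_zero_of_span_eq_top_of_forall_dotProduct_eq_zero hS,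
    fun h v _ => by rw [h, dotProduct_zero]⟩

end Matrix

theorem estimated_invariant_space_eq_true_general
    {p q n : ℕ} (W : Matrix (Fin p) (Fin q) ℝ)
    (x x0 : Fin n → Fin p → ℝ) (Δ : Fin n → Fin q → ℝ)
    (hx : ∀ i, x i = x0 i + W *ᵥ Δ i)
    (P : Finset (Fin n × Fin n))
    (hgroup : ∀ pr ∈ P, x0 pr.1 = x0 pr.2)
    (hspan : Submodule.span ℝ {d : Fin q → ℝ | ∃ pr ∈ P, d = Δ pr.1 - Δ pr.2} = ⊤) :
    {θ : Fin p → ℝ | ∀ pr ∈ P, (x pr.1 - x pr.2) ⬝ᵥ θ = 0}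
      = {θ : Fin p → ℝ | Wᵀ *ᵥ θ = 0} := by
  have hdiff : ∀ pr ∈ P, x pr.1 - x pr.2 = W *ᵥ (Δ pr.1 - Δ pr.2) := fun pr hpr => by
    rw [hx, hx, hgroup pr hpr, mulVec_sub, add_sub_add_left_eq_sub]
  ext θ
  calc (∀ pr ∈ P, (x pr.1 - x pr.2) ⬝ᵥ θ = 0)
      ↔ ∀ d ∈ {d : Fin q → ℝ | ∃ pr ∈ P, d = Δ pr.1 - Δ pr.2}, (W *ᵥ d) ⬝ᵥ θ = 0 := by
        refine ⟨fun h d ⟨pr, hpr, hd⟩ => ?_, fun h pr hpr => ?_⟩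
        · rw [hd, ← hdiff pr hpr]
          exact h pr hpr
        · rw [hdiff pr hpr]
          exact h _ ⟨pr, hpr, rfl⟩
    _ ↔ Wᵀ *ᵥ θ = 0 := forall_mulVec_dotProduct_eq_zero_iff hspan W θ

/-- Identification of the invariant space from grouped observations: in the model
`xᵢ = x⁰ᵢ + WΔᵢ`, if grouped pairs share the same style-free image and the
within-group style differences `Δᵢ − Δᵢ'` span `ℝ^q`, then the set of `θ`
orthogonal to all within-group differences `xᵢ − xᵢ'` equals `{θ : Wᵀθ = 0}`. -/
theorem estimated_invariant_space_eq_true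
    {p q n : ℕ} (W : Matrix (Fin p) (Fin q) ℝ) (hW : W.rank = q)
    (x x0 : Fin n → Fin p → ℝ) (Δ : Fin n → Fin q → ℝ)
    (hx : ∀ i, x i = x0 i + W *ᵥ Δ i)
    (P : Finset (Fin n × Fin n))
    (hgroup : ∀ pr ∈ P, x0 pr.1 = x0 pr.2)
    (hspan : Submodule.span ℝ {d : Fin q → ℝ | ∃ pr ∈ P, d = Δ pr.1 - Δ pr.2} = ⊤) :
    {θ : Fin p → ℝ | ∀ pr ∈ P, (x pr.1 - x pr.2) ⬝ᵥ θ = 0}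
      = {θ : Fin p → ℝ | Wᵀ *ᵥ θ = 0} :=
  estimated_invariant_space_eq_true_general W x x0 Δ hx P hgroup hspan
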